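/- (i) The actions ℕ ↷_θ ℕ*_∞ and ℕ* ↷_ρ ℕ*_∞ are orbit equivalent (indeed the identity map of ℕ*_∞ implements an orbit equivalence, since for both actions the orbit of each k ∈ ℕ* is ℕ* and the orbit of ∞ is {∞}), but they are NOT continuously orbit equivalent. (ii) The actions ℕ ↷_θ ℕ_∞ and ℕ* ↷_ρ ℕ_∞ are not orbit equivalent. -/

import Mathlib

/-!
All the maps `θ_a` (`a ∈ P`) are injective, so `u(x, a b⁻¹)` is the unique `y` with
`θ_a x = θ_b y` and the orbit of `x` is `{y | θ_a x = θ_b y for some a, b ∈ P}`. The four actions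
extend injective self-maps of `ℕ*` or `ℕ` by fixing `∞`, which makes every orbit explicit.

For a continuous orbit equivalence `φ`, `φ⁻¹` maps `ℕ*` to `ℕ*` (the orbit of `∞` is `{∞}`), and the
continuous map `b` on the groupoid of `ρ` gives `g (r m) = g m + b (m, r)` for the injective
`g = φ⁻¹ : ℕ* → ℕ*`. Continuity at `(∞, r)` makes `b (m, r) = d_r` for all large `m`; positivity of
`g` forces `d_r ≥ 0`, and then `g (2 ^ d₃ m) = g m + d₂ d₃ = g (3 ^ d₂ m)`, so `2 ^ d₃ = 3 ^ d₂`,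
whence `d₂ = 0` and `g (2 m) = g m`, contradicting injectivity.

On `ℕ_∞` translation has the two orbits `ℕ`, `{∞}` and multiplication the three orbits `{0}`, `ℕ*`,
`{∞}`, so no bijection carries orbits onto orbits.
-/

/-- Multiplicative `Q_x` for a subsemigroup `P` of a group `G`. -/
def Qset {G X : Type*} [Group G] (P : Set G) (θ : G → X → X) (x : X) : Set G :=
  {g : G | ∃ a ∈ P, ∃ b ∈ P, ∃ y : X, g = a * b⁻¹ ∧ θ a x = θ b y}

/-- Additive `Q_x` for a subsemigroup `P` of `ℤ`. -/
def QsetZ {X : Type*} (P : Set ℤ) (θ : ℤ → X → X) (x : X) : Set ℤ :=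
  {g : ℤ | ∃ a ∈ P, ∃ b ∈ P, ∃ y : X, g = a - b ∧ θ a x = θ b y}

/-- The multiplicative group `ℚ_{>0}` of positive rationals (with the discrete
topology). -/
def QPos : Type := {q : ℚ // 0 < q}

instance : Group QPos := inferInstanceAs (Group {q : ℚ // 0 < q})
instance : TopologicalSpace QPos := ⊥
instance : DiscreteTopology QPos := ⟨rfl⟩

/-- The underlying rational of an element of `ℚ_{>0}`. -/
def QPos.val (q : QPos) : ℚ := Subtype.val q

/-- `ℕ ⊆ ℤ`, the additive subsemigroup of natural numbers. -/
def Pint : Set ℤ := {g : ℤ | 0 ≤ g}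

/-- `ℕ* ⊆ ℚ_{>0}`, the multiplicative subsemigroup of positive integers. -/
def PposInt : Set QPos := {q : QPos | ∃ m : ℕ, q.val = (m : ℚ)}

/-- `ℕ*`, the positive natural numbers. -/
abbrev NStar : Type := {n : ℕ // 0 < n}

/-- `θ_m(n) = n + m`, `θ_m(∞) = ∞` on `ℕ*_∞ = OnePoint ℕ*` (defined for all `m ∈ ℤ`;
for `m ∈ ℕ` the guard is satisfied and the value is `n + m`). -/
def thetaN (g : ℤ) (x : OnePoint NStar) : OnePoint NStar :=
  Option.elim x OnePoint.infty fun n =>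
    if h : 0 < (n.1 : ℤ) + g then OnePoint.some ⟨((n.1 : ℤ) + g).toNat, by omega⟩
    else OnePoint.some n

/-- `ρ_m(n) = n·m`, `ρ_m(∞) = ∞` on `ℕ*_∞` (defined for all `m ∈ ℚ_{>0}`; for
`m ∈ ℕ*` the guard is satisfied and the value is `n·m`). -/
def rhoN (q : QPos) (x : OnePoint NStar) : OnePoint NStar :=
  Option.elim x OnePoint.infty fun n =>
    if h : (q.val * (n.1 : ℚ)).den = 1 ∧ 0 < (q.val * (n.1 : ℚ)).num
    then OnePoint.some ⟨(q.val * (n.1 : ℚ)).num.toNat, by omega⟩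
    else OnePoint.some n

/-- `θ_m(n) = n + m`, `θ_m(∞) = ∞` on `ℕ_∞ = OnePoint ℕ`. -/
def thetaN' (g : ℤ) (x : OnePoint ℕ) : OnePoint ℕ :=
  Option.elim x OnePoint.infty fun n =>
    if 0 ≤ (n : ℤ) + g then OnePoint.some ((n : ℤ) + g).toNat
    else OnePoint.some n

/-- `ρ_m(n) = n·m`, `ρ_m(∞) = ∞` on `ℕ_∞`. -/
def rhoN' (q : QPos) (x : OnePoint ℕ) : OnePoint ℕ :=
  Option.elim x OnePoint.infty fun n =>
    if (q.val * (n : ℚ)).den = 1 ∧ 0 ≤ (q.val * (n : ℚ)).num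
    then OnePoint.some (q.val * (n : ℚ)).num.toNat
    else OnePoint.some n

open Function Set Filter
open scoped OnePoint

section Framework

variable {G X : Type*}

-- `Qset` and `QsetZ` are, definitionally, `QsetBy (· * ·⁻¹)` and `QsetBy (· - ·)`.
def QsetBy (δ : G → G → G) (P : Set G) (θ : G → X → X) (x : X) : Set G :=
  {g | ∃ a ∈ P, ∃ b ∈ P, ∃ y, g = δ a b ∧ θ a x = θ b y}

def IsUMap (δ : G → G → G) (P : Set G) (θ : G → X → X) (u : X → G → X) : Prop :=
  ∀ x, ∀ g ∈ QsetBy δ P θ x, ∀ a ∈ P, ∀ b ∈ P, g = δ a b → θ a x = θ b (u x g)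

def uOrbit (δ : G → G → G) (P : Set G) (θ : G → X → X) (u : X → G → X) (x : X) : Set X :=
  {y | ∃ g ∈ QsetBy δ P θ x, y = u x g}

variable {δ : G → G → G} {P : Set G} {θ : G → X → X} {u : X → G → X}

theorem IsUMap.apply_eq (hu : IsUMap δ P θ u) {a b : G} (ha : a ∈ P) (hb : b ∈ P)
    (hinj : Injective (θ b)) {x y : X} (h : θ a x = θ b y) : u x (δ a b) = y :=
  hinj ((hu x _ ⟨a, ha, b, hb, y, rfl, h⟩ a ha b hb rfl).symm.trans h)

theorem IsUMap.uOrbit_eq (hu : IsUMap δ P θ u) (hinj : ∀ b ∈ P, Injective (θ b)) (x : X) :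
    uOrbit δ P θ u x = {y | ∃ a ∈ P, ∃ b ∈ P, θ a x = θ b y} := by
  ext y
  constructor
  · rintro ⟨g, ⟨a, ha, b, hb, z, rfl, h⟩, rfl⟩
    rw [hu.apply_eq ha hb (hinj b hb) h]
    exact ⟨a, ha, b, hb, h⟩
  · rintro ⟨a, ha, b, hb, h⟩
    exact ⟨δ a b, ⟨a, ha, b, hb, y, rfl, h⟩, (hu.apply_eq ha hb (hinj b hb) h).symm⟩

end Framework

section OnePointMap

variable {G S α : Type*} {δ : G → G → G} {ι : S → G} {θ : G → OnePoint α → OnePoint α}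
  {u : OnePoint α → G → OnePoint α} {f : S → α → α}

theorem injective_of_eq_map (hθ : ∀ s, θ (ι s) = OnePoint.map (f s))
    (hf : ∀ s, Injective (f s)) :
    ∀ b ∈ range ι, Injective (θ b) := by
  rintro _ ⟨t, rfl⟩
  rw [hθ t]
  exact Option.map_injective (hf t)

theorem IsUMap.uOrbit_coe (hu : IsUMap δ (range ι) θ u)
    (hθ : ∀ s, θ (ι s) = OnePoint.map (f s)) (hf : ∀ s, Injective (f s)) (n : α) :
    uOrbit δ (range ι) θ u n = (↑) '' {k | ∃ s t, f s n = f t k} := by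
  rw [hu.uOrbit_eq (injective_of_eq_map hθ hf)]
  ext y
  induction y using OnePoint.rec <;> simp [hθ]

theorem IsUMap.uOrbit_infty [Nonempty S] (hu : IsUMap δ (range ι) θ u)
    (hθ : ∀ s, θ (ι s) = OnePoint.map (f s)) (hf : ∀ s, Injective (f s)) :
    uOrbit δ (range ι) θ u ∞ = {∞} := by
  rw [hu.uOrbit_eq (injective_of_eq_map hθ hf)]
  ext y
  induction y using OnePoint.rec <;> simp [hθ]

end OnePointMap

def NStar.toQPos (r : NStar) : QPos := ⟨r.1, Nat.cast_pos.mpr r.2⟩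

theorem NStar.toQPos_one : NStar.toQPos ⟨1, one_pos⟩ = 1 := rfl

theorem NStar.toQPos_mem_PposInt (r : NStar) : r.toQPos ∈ PposInt := ⟨r, rfl⟩

theorem one_mem_PposInt : (1 : QPos) ∈ PposInt := NStar.toQPos_mem_PposInt ⟨1, one_pos⟩

theorem NStar.add_left_injective (a : ℕ) : Injective fun n : NStar => (⟨n + a, by omega⟩ : NStar) :=
  fun _ _ h => Subtype.ext (by simpa using congrArg Subtype.val h)

theorem NStar.mul_right_injective (r : NStar) :
    Injective fun n : NStar => (⟨r * n, Nat.mul_pos r.2 n.2⟩ : NStar) :=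
  fun _ _ h => Subtype.ext (Nat.eq_of_mul_eq_mul_left r.2 (congrArg Subtype.val h))

theorem range_natCast_eq_Pint : range ((↑) : ℕ → ℤ) = Pint := by
  ext g
  exact ⟨fun ⟨n, hn⟩ => hn ▸ Int.natCast_nonneg n, fun hg => ⟨g.toNat, Int.toNat_of_nonneg hg⟩⟩

theorem range_toQPos_eq_PposInt : range NStar.toQPos = PposInt := by
  ext q
  refine ⟨fun ⟨r, hr⟩ => hr ▸ r.toQPos_mem_PposInt, fun ⟨m, hm⟩ => ⟨⟨m, ?_⟩, Subtype.ext hm.symm⟩⟩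
  have hq : 0 < q.val := q.2
  exact_mod_cast hm ▸ hq

theorem thetaN_natCast (a : ℕ) : thetaN a = OnePoint.map fun n : NStar => ⟨n + a, by omega⟩ := by
  funext x
  induction x using OnePoint.rec with
  | infty => rfl
  | coe n =>
    show dite _ _ _ = _
    rw [dif_pos (by omega)]
    congr

theorem rhoN_toQPos (r : NStar) :
    rhoN r.toQPos = OnePoint.map fun n : NStar => ⟨r * n, Nat.mul_pos r.2 n.2⟩ := by
  funext x
  induction x using OnePoint.rec with
  | infty => rfl
  | coe n =>
    have h : r.toQPos.val * n = ((r * n : ℕ) : ℚ) := by push_cast; rfl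
    show dite _ _ _ = _
    simp only [h, Rat.den_natCast, Rat.num_natCast, Int.toNat_natCast]
    rw [dif_pos ⟨trivial, by exact_mod_cast Nat.mul_pos r.2 n.2⟩]
    rfl

theorem thetaN'_natCast (a : ℕ) : thetaN' a = OnePoint.map (· + a) := by
  funext x
  induction x using OnePoint.rec with
  | infty => rfl
  | coe n =>
    show (if 0 ≤ (n : ℤ) + a then OnePoint.some ((n : ℤ) + a).toNat else OnePoint.some n) = _
    rw [if_pos (by omega)]
    congr

theorem rhoN'_toQPos (r : NStar) : rhoN' r.toQPos = OnePoint.map (r.1 * ·) := by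
  funext x
  induction x using OnePoint.rec with
  | infty => rfl
  | coe n =>
    have h : r.toQPos.val * n = ((r * n : ℕ) : ℚ) := by push_cast; rfl
    show ite _ _ _ = _
    simp only [h, Rat.den_natCast, Rat.num_natCast, Int.toNat_natCast]
    rw [if_pos ⟨trivial, Int.natCast_nonneg _⟩]
    rfl

theorem rhoN_one : rhoN 1 = id := by
  rw [← NStar.toQPos_one, rhoN_toQPos, ← OnePoint.map_id]
  congr with n
  exact one_mul _

section Orbits

variable {uθ : OnePoint NStar → ℤ → OnePoint NStar} {uρ : OnePoint NStar → QPos → OnePoint NStar}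
  {uθ' : OnePoint ℕ → ℤ → OnePoint ℕ} {uρ' : OnePoint ℕ → QPos → OnePoint ℕ}

theorem IsUMap.uOrbit_thetaN_coe (hu : IsUMap (· - ·) Pint thetaN uθ) (n : NStar) :
    uOrbit (· - ·) Pint thetaN uθ n = range ((↑) : NStar → OnePoint NStar) := by
  rw [← range_natCast_eq_Pint] at hu ⊢
  rw [hu.uOrbit_coe thetaN_natCast NStar.add_left_injective, ← image_univ]
  congr
  exact eq_univ_of_forall fun k => ⟨k, n, Subtype.ext (Nat.add_comm _ _)⟩

theorem IsUMap.uOrbit_thetaN_infty (hu : IsUMap (· - ·) Pint thetaN uθ) :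
    uOrbit (· - ·) Pint thetaN uθ ∞ = {∞} := by
  rw [← range_natCast_eq_Pint] at hu ⊢
  exact hu.uOrbit_infty thetaN_natCast NStar.add_left_injective

theorem IsUMap.uOrbit_rhoN_coe (hu : IsUMap (· * ·⁻¹) PposInt rhoN uρ) (n : NStar) :
    uOrbit (· * ·⁻¹) PposInt rhoN uρ n = range ((↑) : NStar → OnePoint NStar) := by
  rw [← range_toQPos_eq_PposInt] at hu ⊢
  rw [hu.uOrbit_coe rhoN_toQPos NStar.mul_right_injective, ← image_univ]
  congr
  exact eq_univ_of_forall fun k => ⟨k, n, Subtype.ext (Nat.mul_comm _ _)⟩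

theorem IsUMap.uOrbit_rhoN_infty (hu : IsUMap (· * ·⁻¹) PposInt rhoN uρ) :
    uOrbit (· * ·⁻¹) PposInt rhoN uρ ∞ = {∞} := by
  rw [← range_toQPos_eq_PposInt] at hu ⊢
  exact hu.uOrbit_infty rhoN_toQPos NStar.mul_right_injective

theorem IsUMap.uOrbit_thetaN'_coe (hu : IsUMap (· - ·) Pint thetaN' uθ') (n : ℕ) :
    uOrbit (· - ·) Pint thetaN' uθ' n = range ((↑) : ℕ → OnePoint ℕ) := by
  rw [← range_natCast_eq_Pint] at hu ⊢
  rw [hu.uOrbit_coe thetaN'_natCast add_left_injective, ← image_univ]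
  congr
  exact eq_univ_of_forall fun k => ⟨k, n, Nat.add_comm _ _⟩

theorem IsUMap.uOrbit_rhoN'_infty (hu : IsUMap (· * ·⁻¹) PposInt rhoN' uρ') :
    uOrbit (· * ·⁻¹) PposInt rhoN' uρ' ∞ = {∞} := by
  rw [← range_toQPos_eq_PposInt] at hu ⊢
  exact hu.uOrbit_infty rhoN'_toQPos fun r => mul_right_injective₀ r.2.ne'

theorem IsUMap.uOrbit_rhoN'_coe (hu : IsUMap (· * ·⁻¹) PposInt rhoN' uρ') (n : ℕ) :
    uOrbit (· * ·⁻¹) PposInt rhoN' uρ' n = (↑) '' {k | ∃ r s : NStar, r * n = s * k} := by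
  rw [← range_toQPos_eq_PposInt] at hu ⊢
  exact hu.uOrbit_coe rhoN'_toQPos (fun r => mul_right_injective₀ r.2.ne') n

theorem IsUMap.uOrbit_rhoN'_zero (hu : IsUMap (· * ·⁻¹) PposInt rhoN' uρ') :
    uOrbit (· * ·⁻¹) PposInt rhoN' uρ' ((0 : ℕ) : OnePoint ℕ) = {((0 : ℕ) : OnePoint ℕ)} := by
  rw [hu.uOrbit_rhoN'_coe, ← image_singleton]
  congr
  ext k
  simp only [mul_zero]
  refine ⟨fun ⟨_, s, h⟩ => (Nat.mul_eq_zero.mp h.symm).resolve_left s.2.ne', fun hk => ?_⟩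
  exact ⟨⟨1, one_pos⟩, ⟨1, one_pos⟩, by rw [hk, mul_zero]⟩

theorem IsUMap.uOrbit_rhoN'_coe_of_ne_zero (hu : IsUMap (· * ·⁻¹) PposInt rhoN' uρ') {n : ℕ}
    (hn : n ≠ 0) : uOrbit (· * ·⁻¹) PposInt rhoN' uρ' n = (↑) '' {0}ᶜ := by
  rw [hu.uOrbit_rhoN'_coe]
  congr
  ext k
  refine ⟨fun ⟨r, s, h⟩ hk => ?_,
    fun hk => ⟨⟨k, Nat.pos_of_ne_zero hk⟩, ⟨n, Nat.pos_of_ne_zero hn⟩, Nat.mul_comm _ _⟩⟩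
  rw [mem_singleton_iff.mp hk, mul_zero] at h
  exact hn ((Nat.mul_eq_zero.mp h).resolve_left r.2.ne')

theorem not_exists_equiv_image_uOrbit_thetaN'_eq (huθ' : IsUMap (· - ·) Pint thetaN' uθ')
    (huρ' : IsUMap (· * ·⁻¹) PposInt rhoN' uρ') :
    ¬ ∃ φ : OnePoint ℕ ≃ OnePoint ℕ, ∀ x, φ '' uOrbit (· - ·) Pint thetaN' uθ' x =
      uOrbit (· * ·⁻¹) PposInt rhoN' uρ' (φ x) := by
  rintro ⟨φ, hφ⟩
  have h0 := hφ (0 : ℕ)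
  rw [huθ'.uOrbit_thetaN'_coe] at h0
  have hmem (k : ℕ) : φ k ∈ uOrbit (· * ·⁻¹) PposInt rhoN' uρ' (φ (0 : ℕ)) :=
    h0 ▸ mem_image_of_mem φ (mem_range_self k)
  have hsep : φ (0 : ℕ) ≠ φ (1 : ℕ) := φ.injective.ne (by simp)
  have hcompl : {φ ∞} = (uOrbit (· * ·⁻¹) PposInt rhoN' uρ' (φ (0 : ℕ)))ᶜ := by
    rw [← h0, ← φ.image_compl, OnePoint.compl_range_coe, image_singleton]
  induction hx : φ (0 : ℕ) using OnePoint.rec with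
  | infty =>
    rw [hx, huρ'.uOrbit_rhoN'_infty] at hmem
    exact hsep ((hmem 0).trans (hmem 1).symm)
  | coe n =>
    rcases eq_or_ne n 0 with rfl | hn
    · rw [hx, huρ'.uOrbit_rhoN'_zero] at hmem
      exact hsep ((hmem 0).trans (hmem 1).symm)
    · rw [hx, huρ'.uOrbit_rhoN'_coe_of_ne_zero hn] at hcompl
      have hinf : ∞ ∈ ({φ ∞} : Set (OnePoint ℕ)) := hcompl ▸ by simp
      have hzero : ((0 : ℕ) : OnePoint ℕ) ∈ ({φ ∞} : Set (OnePoint ℕ)) := hcompl ▸ by simp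
      exact OnePoint.coe_ne_infty 0 (hzero.trans hinf.symm)

end Orbits

theorem Nat.eq_zero_of_two_pow_eq_three_pow {a b : ℕ} (h : 2 ^ a = 3 ^ b) : a = 0 ∧ b = 0 := by
  have ha : a = 0 := by
    by_contra ha
    have : Even (3 ^ b) := h ▸ (Nat.even_pow.mpr ⟨even_two, ha⟩)
    exact Nat.not_even_iff_odd.mpr (Odd.pow (by decide)) this
  subst ha
  exact ⟨rfl, (Nat.pow_eq_one.mp h.symm).resolve_left (by norm_num)⟩

section MulEqAdd

variable {f : ℕ → ℕ} {r M : ℕ} {d : ℤ}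

theorem apply_pow_mul_eq_of_mul_eq_add (hr : 0 < r) (h : ∀ m ≥ M, (f (r * m) : ℤ) = f m + d)
    (j : ℕ) {m : ℕ} (hm : M ≤ m) : (f (r ^ j * m) : ℤ) = f m + j * d := by
  induction j with
  | zero => simp
  | succ j ih =>
    rw [pow_succ', mul_assoc, h _ (hm.trans (Nat.le_mul_of_pos_left m (pow_pos hr j))), ih]
    push_cast
    ring

theorem nonneg_of_mul_eq_add (hr : 0 < r) (h : ∀ m ≥ M, (f (r * m) : ℤ) = f m + d) : 0 ≤ d := by
  by_contra! hd
  have key := apply_pow_mul_eq_of_mul_eq_add hr h (f M + 1) le_rfl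
  have : ((f M + 1 : ℕ) : ℤ) * d ≤ -(f M + 1 : ℕ) := by nlinarith
  push_cast at this key
  linarith [(f (r ^ (f M + 1) * M)).cast_nonneg (α := ℤ)]

theorem not_injOn_of_mul_two_three_eq_add {d₂ d₃ : ℤ}
    (h₂ : ∀ᶠ m in atTop, (f (2 * m) : ℤ) = f m + d₂)
    (h₃ : ∀ᶠ m in atTop, (f (3 * m) : ℤ) = f m + d₃) :
    ¬ InjOn f (Ioi 0) := by
  intro hf
  obtain ⟨M, hM⟩ := eventually_atTop.mp (h₂.and h₃)
  have h₂' : ∀ m ≥ M, (f (2 * m) : ℤ) = f m + d₂ := fun m hm => (hM m hm).1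
  have h₃' : ∀ m ≥ M, (f (3 * m) : ℤ) = f m + d₃ := fun m hm => (hM m hm).2
  lift d₂ to ℕ using nonneg_of_mul_eq_add two_pos h₂'
  lift d₃ to ℕ using nonneg_of_mul_eq_add three_pos h₃'
  have hM1 : M ≤ M + 1 := M.le_succ
  have hsame : f (2 ^ d₃ * (M + 1)) = f (3 ^ d₂ * (M + 1)) := by
    have e₂ := apply_pow_mul_eq_of_mul_eq_add two_pos h₂' d₃ hM1
    have e₃ := apply_pow_mul_eq_of_mul_eq_add three_pos h₃' d₂ hM1
    exact_mod_cast e₂.trans (e₃.trans (by ring)).symm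
  have hpow := Nat.eq_of_mul_eq_mul_right M.succ_pos
    (hf (mem_Ioi.2 (by positivity)) (mem_Ioi.2 (by positivity)) hsame)
  obtain ⟨rfl, rfl⟩ := Nat.eq_zero_of_two_pow_eq_three_pow hpow
  have h2M : f (2 * (M + 1)) = f (M + 1) := by
    exact_mod_cast (h₂' (M + 1) hM1).trans (add_zero _)
  have := hf (mem_Ioi.2 (by positivity)) (mem_Ioi.2 M.succ_pos) h2M
  omega

end MulEqAdd

theorem Continuous.eventually_eq_infty {α β : Type*} [TopologicalSpace α] [DiscreteTopology α]
    [TopologicalSpace β] [DiscreteTopology β] {c : OnePoint α → β} (hc : Continuous c) :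
    ∀ᶠ a : α in cofinite, c a = c ∞ := by
  have := (hc.tendsto ∞).comp OnePoint.tendsto_coe_infty
  rwa [nhds_discrete, tendsto_pure, coclosedCompact_eq_cocompact, cocompact_eq_cofinite] at this

theorem NStar.eventually_atTop_of_cofinite {p : NStar → Prop} (h : ∀ᶠ m in cofinite, p m) :
    ∀ᶠ n in atTop, ∀ hn : 0 < n, p ⟨n, hn⟩ := by
  rw [← Subtype.val_injective.comap_cofinite_eq, Nat.cofinite_eq_atTop] at h
  exact (eventually_comap.mp h).mono fun n hn hpos => hn _ rfl


section ContinuousOrbitEquiv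

variable {uθ : OnePoint NStar → ℤ → OnePoint NStar} {uρ : OnePoint NStar → QPos → OnePoint NStar}
  {ψ : OnePoint NStar → OnePoint NStar}
  {b : {q : OnePoint NStar × QPos // q.2 ∈ Qset PposInt rhoN q.1} → ℤ}

theorem toQPos_mem_Qset_rhoN (r : NStar) (x : OnePoint NStar) : r.toQPos ∈ Qset PposInt rhoN x :=
  ⟨r.toQPos, r.toQPos_mem_PposInt, 1, one_mem_PposInt, rhoN r.toQPos x, by rw [inv_one, mul_one],
    by rw [rhoN_one, id]⟩

theorem IsUMap.rhoN_toQPos_coe (hu : IsUMap (· * ·⁻¹) PposInt rhoN uρ) (r m : NStar) :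
    uρ m r.toQPos = (⟨r * m, Nat.mul_pos r.2 m.2⟩ : NStar) := by
  have h := hu.apply_eq r.toQPos_mem_PposInt one_mem_PposInt (by rw [rhoN_one]; exact injective_id)
    (x := m) (y := (⟨r * m, Nat.mul_pos r.2 m.2⟩ : NStar)) (by rw [rhoN_one, rhoN_toQPos]; rfl)
  rwa [inv_one, mul_one] at h

theorem IsUMap.thetaN_coe (hu : IsUMap (· - ·) Pint thetaN uθ) {k : NStar} {g : ℤ}
    (hg : g ∈ QsetZ Pint thetaN k) : ∃ j : NStar, uθ k g = j ∧ (j : ℤ) = k + g := by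
  obtain ⟨a, ha, b, hb, y, rfl, h⟩ := hg
  lift a to ℕ using ha
  lift b to ℕ using hb
  rw [hu.apply_eq (Int.natCast_nonneg a) (Int.natCast_nonneg b)
    (injective_of_eq_map thetaN_natCast NStar.add_left_injective _ ⟨b, rfl⟩) h]
  rw [thetaN_natCast, thetaN_natCast] at h
  induction y using OnePoint.rec with
  | infty => exact absurd h (OnePoint.coe_ne_infty _)
  | coe j =>
    have := congrArg Subtype.val (OnePoint.coe_injective h)
    exact ⟨j, rfl, by simp only at this; omega⟩

theorem IsUMap.thetaN_infty (hu : IsUMap (· - ·) Pint thetaN uθ) {g : ℤ}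
    (hg : g ∈ QsetZ Pint thetaN ∞) : uθ ∞ g = ∞ := by
  have h : uθ ∞ g ∈ uOrbit (· - ·) Pint thetaN uθ ∞ := ⟨g, hg, rfl⟩
  rwa [hu.uOrbit_thetaN_infty] at h

def rhoGroupoidPt (r : NStar) (x : OnePoint NStar) :
    {q : OnePoint NStar × QPos // q.2 ∈ Qset PposInt rhoN q.1} :=
  ⟨(x, r.toQPos), toQPos_mem_Qset_rhoN r x⟩

theorem val_eq_add_of_cocycle (huθ : IsUMap (· - ·) Pint thetaN uθ)
    (huρ : IsUMap (· * ·⁻¹) PposInt rhoN uρ)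
    (hB : ∀ q, b q ∈ QsetZ Pint thetaN (ψ q.1.1) ∧ ψ (uρ q.1.1 q.1.2) = uθ (ψ q.1.1) (b q))
    (r m : NStar) {k j : NStar} (hk : ψ m = k) (hj : ψ (⟨r * m, Nat.mul_pos r.2 m.2⟩ : NStar) = j) :
    (j : ℤ) = k + b (rhoGroupoidPt r m) := by
  obtain ⟨hmem, heq⟩ := hB (rhoGroupoidPt r m)
  dsimp only [rhoGroupoidPt] at hmem heq
  rw [hk] at hmem heq
  rw [huρ.rhoN_toQPos_coe, hj] at heq
  obtain ⟨j', hj', hval⟩ := huθ.thetaN_coe hmem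
  rw [hj', OnePoint.coe_injective.eq_iff] at heq
  rw [heq]
  exact hval

theorem ne_infty_of_cocycle (huθ : IsUMap (· - ·) Pint thetaN uθ)
    (huρ : IsUMap (· * ·⁻¹) PposInt rhoN uρ) (hψ : Injective ψ)
    (hB : ∀ q, b q ∈ QsetZ Pint thetaN (ψ q.1.1) ∧ ψ (uρ q.1.1 q.1.2) = uθ (ψ q.1.1) (b q))
    (m : NStar) : ψ m ≠ ∞ := by
  intro hm
  obtain ⟨hmem, heq⟩ := hB (rhoGroupoidPt ⟨2, two_pos⟩ m)
  dsimp only [rhoGroupoidPt] at hmem heq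
  rw [hm] at hmem heq
  rw [huρ.rhoN_toQPos_coe, huθ.thetaN_infty hmem, ← hm] at heq
  have := congrArg Subtype.val (OnePoint.coe_injective (hψ heq))
  simp only at this
  omega

theorem false_of_continuous_cocycle (huθ : IsUMap (· - ·) Pint thetaN uθ)
    (huρ : IsUMap (· * ·⁻¹) PposInt rhoN uρ) (hψ : Injective ψ)
    (hb : Continuous b)
    (hB : ∀ q, b q ∈ QsetZ Pint thetaN (ψ q.1.1) ∧ ψ (uρ q.1.1 q.1.2) = uθ (ψ q.1.1) (b q)) :
    False := by
  choose g hg using fun m => OnePoint.ne_infty_iff_exists.mp (ne_infty_of_cocycle huθ huρ hψ hB m)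
  set f : ℕ → ℕ := fun n => if h : 0 < n then g ⟨n, h⟩ else 0 with hf_def
  have hf : InjOn f (Ioi 0) := fun n hn n' hn' h => by
    simp only [hf_def, dif_pos (mem_Ioi.mp hn), dif_pos (mem_Ioi.mp hn')] at h
    have := hψ ((hg _).symm.trans ((congrArg _ (Subtype.ext h)).trans (hg _)))
    exact congrArg Subtype.val (OnePoint.coe_injective this)
  have hcocycle (r : NStar) : ∀ᶠ n in atTop, (f (r * n) : ℤ) = f n + b (rhoGroupoidPt r ∞) := by
    have hc : Continuous fun x => b (rhoGroupoidPt r x) :=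
      hb.comp ((continuous_id.prodMk continuous_const).subtype_mk _)
    filter_upwards [NStar.eventually_atTop_of_cofinite hc.eventually_eq_infty,
      eventually_gt_atTop 0] with n hn hpos
    rw [← hn hpos]
    simp only [hf_def, dif_pos hpos, dif_pos (Nat.mul_pos r.2 hpos)]
    exact val_eq_add_of_cocycle huθ huρ hB r ⟨n, hpos⟩ (hg _).symm (hg _).symm
  exact not_injOn_of_mul_two_three_eq_add (hcocycle ⟨2, two_pos⟩) (hcocycle ⟨3, three_pos⟩) hf

end ContinuousOrbitEquiv

/-- (i) the actions `ℕ ↷ ℕ*_∞` (translation) and `ℕ* ↷ ℕ*_∞`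
(multiplication) are orbit equivalent — indeed the identity map implements an orbit
equivalence, the orbit of every `k ∈ ℕ*` being `ℕ*` and that of `∞` being `{∞}` for both
actions — but they are NOT continuously orbit equivalent.  (ii) The actions `ℕ ↷ ℕ_∞`
and `ℕ* ↷ ℕ_∞` are not orbit equivalent. -/
theorem stmt_19
    (uθ : OnePoint NStar → ℤ → OnePoint NStar)
    (huθ : ∀ x : OnePoint NStar, ∀ g ∈ QsetZ Pint thetaN x, ∀ a ∈ Pint, ∀ b ∈ Pint,
      g = a - b → thetaN a x = thetaN b (uθ x g))
    (uρ : OnePoint NStar → QPos → OnePoint NStar)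
    (huρ : ∀ x : OnePoint NStar, ∀ h ∈ Qset PposInt rhoN x, ∀ a ∈ PposInt, ∀ b ∈ PposInt,
      h = a * b⁻¹ → rhoN a x = rhoN b (uρ x h))
    (uθ' : OnePoint ℕ → ℤ → OnePoint ℕ)
    (huθ' : ∀ x : OnePoint ℕ, ∀ g ∈ QsetZ Pint thetaN' x, ∀ a ∈ Pint, ∀ b ∈ Pint,
      g = a - b → thetaN' a x = thetaN' b (uθ' x g))
    (uρ' : OnePoint ℕ → QPos → OnePoint ℕ)
    (huρ' : ∀ x : OnePoint ℕ, ∀ h ∈ Qset PposInt rhoN' x, ∀ a ∈ PposInt, ∀ b ∈ PposInt,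
      h = a * b⁻¹ → rhoN' a x = rhoN' b (uρ' x h)) :
    (∀ n : NStar,
      {y | ∃ g ∈ QsetZ Pint thetaN (OnePoint.some n), y = uθ (OnePoint.some n) g}
        = Set.range (OnePoint.some : NStar → OnePoint NStar) ∧
      {y | ∃ h ∈ Qset PposInt rhoN (OnePoint.some n), y = uρ (OnePoint.some n) h}
        = Set.range (OnePoint.some : NStar → OnePoint NStar)) ∧
    ({y | ∃ g ∈ QsetZ Pint thetaN OnePoint.infty, y = uθ OnePoint.infty g}
        = {OnePoint.infty} ∧
     {y | ∃ h ∈ Qset PposInt rhoN OnePoint.infty, y = uρ OnePoint.infty h}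
        = {OnePoint.infty}) ∧
    (∀ x : OnePoint NStar,
      {y | ∃ g ∈ QsetZ Pint thetaN x, y = uθ x g}
        = {y | ∃ h ∈ Qset PposInt rhoN x, y = uρ x h}) ∧
    ¬ (∃ (φ : OnePoint NStar ≃ₜ OnePoint NStar)
        (a : {q : OnePoint NStar × ℤ // q.2 ∈ QsetZ Pint thetaN q.1} → QPos)
        (b : {q : OnePoint NStar × QPos // q.2 ∈ Qset PposInt rhoN q.1} → ℤ),
        Continuous a ∧ Continuous b ∧
        (∀ p : {q : OnePoint NStar × ℤ // q.2 ∈ QsetZ Pint thetaN q.1},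
          a p ∈ Qset PposInt rhoN (φ p.1.1) ∧
          φ (uθ p.1.1 p.1.2) = uρ (φ p.1.1) (a p)) ∧
        (∀ q : {q : OnePoint NStar × QPos // q.2 ∈ Qset PposInt rhoN q.1},
          b q ∈ QsetZ Pint thetaN (φ.symm q.1.1) ∧
          φ.symm (uρ q.1.1 q.1.2) = uθ (φ.symm q.1.1) (b q))) ∧
    ¬ (∃ φ : OnePoint ℕ ≃ₜ OnePoint ℕ, ∀ x : OnePoint ℕ,
        φ '' {y | ∃ g ∈ QsetZ Pint thetaN' x, y = uθ' x g}
          = {y | ∃ h ∈ Qset PposInt rhoN' (φ x), y = uρ' (φ x) h}) := by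
  replace huθ : IsUMap (· - ·) Pint thetaN uθ := huθ
  replace huρ : IsUMap (· * ·⁻¹) PposInt rhoN uρ := huρ
  refine ⟨fun n => ⟨huθ.uOrbit_thetaN_coe n, huρ.uOrbit_rhoN_coe n⟩,
    ⟨huθ.uOrbit_thetaN_infty, huρ.uOrbit_rhoN_infty⟩, fun x => ?_, ?_, ?_⟩
  · induction x using OnePoint.rec with
    | infty => exact huθ.uOrbit_thetaN_infty.trans huρ.uOrbit_rhoN_infty.symm
    | coe n => exact (huθ.uOrbit_thetaN_coe n).trans (huρ.uOrbit_rhoN_coe n).symm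
  · rintro ⟨φ, -, b, -, hb, -, hB⟩
    exact false_of_continuous_cocycle huθ huρ φ.symm.injective hb hB
  · rintro ⟨φ, hφ⟩
    exact not_exists_equiv_image_uOrbit_thetaN'_eq huθ' huρ' ⟨φ.toEquiv, hφ⟩
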